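/- arXiv:2311.06294 — 4 statements merged into one kernel-verified Lean document; each statement's English description precedes it below -/
import Mathlib

section
/- The series of H(k)/k^2 over positive integers k converges to 2ζ(3), where H(k) is the k-th harmonic number. -/
open scoped BigOperators

/-- The harmonic number `H k = ∑_{j=1}^k 1/j`. -/
noncomputable def H (k : ℕ) : ℝ := ∑ j ∈ Finset.Icc 1 k, (1 : ℝ) / j

/-- The generalized harmonic number `H^{(p)} k = ∑_{j=1}^k 1/j^p`. -/
noncomputable def Hgen (p k : ℕ) : ℝ := ∑ j ∈ Finset.Icc 1 k, (1 : ℝ) / (j : ℝ) ^ p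

/-!
Sum `S = ∑_{j,k ≥ 0} 1 / ((j+1)(k+1)(j+k+2))` in two ways. Along rows, the partial fractions
`1 / ((k+1)(j+k+2)) = (1/(j+1)) (1/(k+1) - 1/(k+j+2))` telescope to `H(j+1)/(j+1)`, so
`S = ∑ H(n)/n²`. Along the antidiagonals `j + k = n`, the partial fractions
`1 / ((j+1)(k+1)) = (1/(n+2)) (1/(j+1) + 1/(k+1))` give `2 H(n+1)/(n+2)²`, so
`S = 2 ∑ H(n-1)/n² = 2 ∑ (H(n) - 1/n)/n² = 2 (S - ζ(3))`, whence `S = 2 ζ(3)`.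
-/

open Filter Topology Finset

lemma H_eq_sum_range (n : ℕ) : H n = ∑ i ∈ range n, 1 / ((i : ℝ) + 1) := by
  rw [H, ← Ico_add_one_right_eq_Icc, sum_Ico_eq_sum_range]
  simp [add_comm]

lemma H_succ (n : ℕ) : H (n + 1) = H n + 1 / ((n : ℝ) + 1) := by
  simp [H_eq_sum_range, sum_range_succ]

lemma Antitone.hasSum_sub_add {u : ℕ → ℝ} (hu : Antitone u) (hlim : Tendsto u atTop (𝓝 0))
    (m : ℕ) : HasSum (fun k ↦ u k - u (k + m)) (∑ i ∈ range m, u i) := by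
  refine (hasSum_iff_tendsto_nat_of_nonneg (fun k ↦ sub_nonneg.2 (hu (k.le_add_right m))) _).2 ?_
  have partial_sum (n : ℕ) : ∑ k ∈ range n, (u k - u (k + m)) =
      ∑ i ∈ range m, u i - ∑ i ∈ range m, u (n + i) := by
    have h₁ := sum_range_add u n m
    rw [add_comm n m, sum_range_add u m n] at h₁
    simp only [sum_sub_distrib, add_comm _ m]
    linarith
  have tail : Tendsto (fun n ↦ ∑ i ∈ range m, u (n + i)) atTop (𝓝 0) := by
    simpa using tendsto_finsetSum (range m) fun i _ ↦ hlim.comp (tendsto_add_atTop_nat i)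
  simpa [partial_sum] using tail.const_sub (∑ i ∈ range m, u i)

lemma hasSum_one_div_add_one_sub_one_div_add_add_one (m : ℕ) :
    HasSum (fun k : ℕ ↦ 1 / ((k : ℝ) + 1) - 1 / ((k : ℝ) + m + 1)) (H m) := by
  have hu : Antitone fun k : ℕ ↦ 1 / ((k : ℝ) + 1) := fun a b hab ↦
    one_div_le_one_div_of_le (by positivity) (by gcongr)
  simpa [H_eq_sum_range, add_assoc] using
    hu.hasSum_sub_add tendsto_one_div_add_atTop_nhds_zero_nat m

theorem HasSum.sum_antidiagonal {α A : Type*} [AddCommMonoid α] [TopologicalSpace α]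
    [ContinuousAdd α] [RegularSpace α] [AddCommMonoid A] [HasAntidiagonal A] {f : A × A → α}
    {a : α} (h : HasSum f a) : HasSum (fun n ↦ ∑ p ∈ antidiagonal n, f p) a :=
  (HasAntidiagonal.sigmaAntidiagonalEquivProd.hasSum_iff.2 h).sigma fun n ↦
    (antidiagonal n).hasSum f

noncomputable def eulerTerm (p : ℕ × ℕ) : ℝ :=
  1 / (((p.1 : ℝ) + 1) * ((p.2 : ℝ) + 1) * ((p.1 : ℝ) + p.2 + 2))

lemma eulerTerm_nonneg (p : ℕ × ℕ) : 0 ≤ eulerTerm p := by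
  unfold eulerTerm
  positivity

-- `√(ab) ≤ a + b` turns `1 / (a b (a + b))` into a product of two `p`-series terms with `p = 3/2`.
lemma eulerTerm_le (p : ℕ × ℕ) :
    eulerTerm p ≤ 1 / ((p.1 : ℝ) + 1) ^ (3 / 2 : ℝ) * (1 / ((p.2 : ℝ) + 1) ^ (3 / 2 : ℝ)) := by
  set a : ℝ := p.1 + 1
  set b : ℝ := p.2 + 1
  have ha : 0 < a := by positivity
  have hb : 0 < b := by positivity
  have hab : 0 < a * b := mul_pos ha hb
  have pow_three_halves : (a * b) ^ (3 / 2 : ℝ) = a * b * √(a * b) := by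
    rw [show (3 / 2 : ℝ) = 1 + 1 / 2 by norm_num, Real.rpow_add hab, Real.rpow_one,
      Real.sqrt_eq_rpow]
  have sqrt_le : √(a * b) ≤ a + b :=
    Real.sqrt_le_iff.2 ⟨by positivity, by nlinarith⟩
  rw [div_mul_div_comm, one_mul, ← Real.mul_rpow ha.le hb.le, pow_three_halves, eulerTerm,
    show (p.1 : ℝ) + p.2 + 2 = a + b by simp only [a, b]; ring]
  gcongr

lemma summable_eulerTerm : Summable eulerTerm := by
  have hg : Summable fun n : ℕ ↦ 1 / ((n : ℝ) + 1) ^ (3 / 2 : ℝ) := by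
    refine ((Real.summable_one_div_nat_add_rpow 1 (3 / 2)).2 (by norm_num)).congr fun n ↦ ?_
    rw [abs_of_nonneg (by positivity)]
  exact .of_nonneg_of_le eulerTerm_nonneg eulerTerm_le
    (hg.mul_of_nonneg hg (fun _ ↦ by positivity) fun _ ↦ by positivity)

lemma hasSum_eulerTerm_row (j : ℕ) :
    HasSum (fun k ↦ eulerTerm (j, k)) (H (j + 1) / ((j : ℝ) + 1) ^ 2) := by
  have partial_fractions (k : ℕ) : eulerTerm (j, k) =
      1 / ((j : ℝ) + 1) ^ 2 * (1 / ((k : ℝ) + 1) - 1 / ((k : ℝ) + (j + 1 : ℕ) + 1)) := by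
    rw [eulerTerm]
    push_cast
    field_simp
    ring
  simp only [partial_fractions, ← one_div_mul_eq_div _ (H (j + 1))]
  exact (hasSum_one_div_add_one_sub_one_div_add_add_one (j + 1)).mul_left _

lemma sum_antidiagonal_eulerTerm (n : ℕ) :
    ∑ p ∈ antidiagonal n, eulerTerm p = 2 * H (n + 1) / ((n : ℝ) + 2) ^ 2 := by
  have partial_fractions (p : ℕ × ℕ) (hp : p ∈ antidiagonal n) : eulerTerm p =
      1 / ((n : ℝ) + 2) ^ 2 * (1 / ((p.1 : ℝ) + 1) + 1 / ((p.2 : ℝ) + 1)) := by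
    rw [HasAntidiagonal.mem_antidiagonal] at hp
    rw [eulerTerm, ← hp]
    push_cast
    field_simp
    ring
  have sum_fst : ∑ p ∈ antidiagonal n, 1 / ((p.1 : ℝ) + 1) = H (n + 1) := by
    rw [Nat.sum_antidiagonal_eq_sum_range_succ_mk, H_eq_sum_range]
  have sum_snd : ∑ p ∈ antidiagonal n, 1 / ((p.2 : ℝ) + 1) = H (n + 1) := by
    rw [← Nat.sum_antidiagonal_swap, ← sum_fst]
    rfl
  rw [sum_congr rfl partial_fractions, ← mul_sum, sum_add_distrib, sum_fst, sum_snd]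
  ring

theorem hasSum_H_div_sq {z : ℝ} (hz : HasSum (fun n : ℕ ↦ 1 / ((n : ℝ) + 1) ^ 3) z) :
    HasSum (fun k : ℕ ↦ H (k + 1) / ((k : ℝ) + 1) ^ 2) (2 * z) := by
  set S := ∑' p, eulerTerm p
  have by_rows : HasSum (fun k : ℕ ↦ H (k + 1) / ((k : ℝ) + 1) ^ 2) S :=
    summable_eulerTerm.hasSum.prod_fiberwise hasSum_eulerTerm_row
  have by_antidiagonals : HasSum (fun n : ℕ ↦ 2 * H (n + 1) / ((n : ℝ) + 2) ^ 2) S := by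
    simpa only [sum_antidiagonal_eulerTerm] using summable_eulerTerm.hasSum.sum_antidiagonal
  -- `c 0 = 0`, so the antidiagonal series is `2 ∑ c n` without a shift
  set c : ℕ → ℝ := fun n ↦ H n / ((n : ℝ) + 1) ^ 2
  have hc_rows : HasSum c (S - z) := by
    refine (by_rows.sub hz).congr_fun fun n ↦ ?_
    simp only [c, H_succ]
    field_simp
    ring
  have hc_antidiagonals : HasSum (fun n ↦ 2 * c n) S := by
    refine (hasSum_nat_add_iff' 1).1 ?_
    simpa [c, H, add_assoc, one_add_one_eq_two, mul_div_assoc] using by_antidiagonals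
  have hS : S = 2 * z := by linarith [hc_antidiagonals.unique (hc_rows.mul_left 2)]
  rwa [hS] at by_rows

lemma riemannZeta_three_eq_tsum :
    riemannZeta 3 = ((∑' n : ℕ, 1 / ((n : ℝ) + 1) ^ 3 : ℝ) : ℂ) := by
  rw [zeta_eq_tsum_one_div_nat_add_one_cpow (by norm_num), Complex.ofReal_tsum]
  simp [Complex.cpow_ofNat]

theorem euler_sum_0 :
    HasSum (fun k : ℕ => (H (k+1) : ℂ) / ((k : ℂ) + 1) ^ 2) (2 * riemannZeta 3) := by
  have hz : Summable fun n : ℕ ↦ 1 / ((n : ℝ) + 1) ^ 3 := by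
    exact_mod_cast (summable_nat_add_iff 1).2 (Real.summable_one_div_nat_pow.2 (by norm_num))
  rw [riemannZeta_three_eq_tsum]
  exact_mod_cast Complex.hasSum_ofReal.2 (hasSum_H_div_sq hz.hasSum)
end

section
/- The series of H(k)/k^4 over positive integers k converges to 3ζ(5) − ζ(2)ζ(3). -/
open scoped BigOperators

/-!
Write `S` for the sum and `T(p, q) = ∑_{0<u<v} 1 / (u^p v^q)`. Separating the term `j = k` of
`H(k) / k⁴ = ∑_{j ≤ k} 1 / (j k⁴)` gives `S = ζ(5) + T(1, 4)`. Writing instead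
`H(a) = ∑_{b ≥ 1} (1/b - 1/(a + b))` turns `S` into `∑_{a, b ≥ 1} 1 / (a³ b (a + b))`, which
partial fractions split into `2 T(1, 4) + T(3, 2) + T(2, 3)`. Splitting `ζ(2) ζ(3)` according to
`u < v`, `u = v`, `u > v` gives `ζ(2) ζ(3) = T(2, 3) + ζ(5) + T(3, 2)`. Eliminating the `T`s
yields `S = 3 ζ(5) - ζ(2) ζ(3)`.
-/

open Finset Filter Topology

namespace EulerSum

lemma H_eq_sum_range (k : ℕ) : H k = ∑ j ∈ range k, 1 / ((j : ℝ) + 1) := by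
  rw [H, range_eq_Ico, ← Ico_add_one_right_eq_Icc]
  simpa using (sum_Ico_add' (fun j : ℕ => (1 : ℝ) / j) 0 k 1).symm

lemma hasSum_sub_add_of_antitone {f : ℕ → ℝ} (hf : Antitone f)
    (hf0 : Tendsto f atTop (𝓝 0)) (k : ℕ) :
    HasSum (fun m => f m - f (m + k)) (∑ i ∈ range k, f i) := by
  rw [hasSum_iff_tendsto_nat_of_nonneg (fun m => sub_nonneg.2 (hf (Nat.le_add_right m k)))]
  have partial_sum (M : ℕ) : ∑ m ∈ range M, (f m - f (m + k))
      = ∑ i ∈ range k, f i - ∑ i ∈ range k, f (M + i) := by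
    have h := sum_range_add f M k
    rw [add_comm M k, sum_range_add] at h
    simp only [sum_sub_distrib, add_comm _ k]
    linarith
  have htail : Tendsto (fun M => ∑ i ∈ range k, f (M + i)) atTop (𝓝 0) := by
    simpa using tendsto_finsetSum (range k) fun i _ => hf0.comp (tendsto_add_atTop_nat i)
  simpa [partial_sum] using tendsto_const_nhds.sub htail

noncomputable def upperDiagLowerEquiv : (ℕ × ℕ) ⊕ ℕ ⊕ (ℕ × ℕ) ≃ ℕ × ℕ :=
  Equiv.ofBijective
    (fun
      | .inl x => (x.1, x.1 + x.2 + 1)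
      | .inr (.inl i) => (i, i)
      | .inr (.inr x) => (x.1 + x.2 + 1, x.1))
    (by
      constructor
      · rintro (⟨i, j⟩ | i | ⟨i, j⟩) (⟨k, l⟩ | k | ⟨k, l⟩) h <;>
          simp only [Prod.mk.injEq] at h <;> first | omega | (congr <;> omega)
      · rintro ⟨a, b⟩
        rcases lt_trichotomy a b with h | rfl | h
        · exact ⟨.inl (a, b - a - 1), Prod.ext rfl (by dsimp only; omega)⟩
        · exact ⟨.inr (.inl a), rfl⟩
        · exact ⟨.inr (.inr (b, a - b - 1)), Prod.ext (by dsimp only; omega) rfl⟩)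

theorem hasSum_prod_of_upper_diag_lower {α : Type*} [AddCommMonoid α] [TopologicalSpace α]
    [ContinuousAdd α] {f : ℕ × ℕ → α} {a b c : α}
    (hu : HasSum (fun x : ℕ × ℕ => f (x.1, x.1 + x.2 + 1)) a)
    (hd : HasSum (fun i => f (i, i)) b)
    (hl : HasSum (fun x : ℕ × ℕ => f (x.1 + x.2 + 1, x.1)) c) : HasSum f (a + (b + c)) :=
  upperDiagLowerEquiv.hasSum_iff.mp (hu.sum (hd.sum hl))

noncomputable def zetaNat (p : ℕ) : ℝ := ∑' n : ℕ, 1 / ((n : ℝ) + 1) ^ p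

/-- Summing `doubleZetaTerm p q` over `ℕ × ℕ` gives `∑_{0 < u < v} 1 / (u ^ p * v ^ q)`, with
`u = i + 1` and `v = i + j + 2`. -/
noncomputable def doubleZetaTerm (p q : ℕ) (x : ℕ × ℕ) : ℝ :=
  1 / (((x.1 : ℝ) + 1) ^ p * ((x.1 : ℝ) + x.2 + 2) ^ q)

noncomputable def doubleZeta (p q : ℕ) : ℝ := ∑' x, doubleZetaTerm p q x

lemma summable_one_div_succ_pow {p : ℕ} (hp : 1 < p) :
    Summable fun n : ℕ => 1 / ((n : ℝ) + 1) ^ p := by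
  simpa using (summable_nat_add_iff 1).2 (Real.summable_one_div_nat_pow.2 hp)

lemma hasSum_zetaNat {p : ℕ} (hp : 1 < p) :
    HasSum (fun n : ℕ => 1 / ((n : ℝ) + 1) ^ p) (zetaNat p) :=
  (summable_one_div_succ_pow hp).hasSum

lemma riemannZeta_natCast {p : ℕ} (hp : 1 < p) : riemannZeta p = zetaNat p := by
  rw [zeta_eq_tsum_one_div_nat_add_one_cpow (by simpa using hp), zetaNat, Complex.ofReal_tsum]
  push_cast
  simp_rw [Complex.cpow_natCast]

lemma summable_doubleZetaTerm {p q : ℕ} (hq : 2 ≤ q) (hpq : 4 ≤ p + q) :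
    Summable (doubleZetaTerm p q) := by
  have hbound := (summable_one_div_succ_pow (p := p + q - 2) (by omega)).mul_of_nonneg
    (summable_one_div_succ_pow one_lt_two) (fun _ => by positivity) (fun _ => by positivity)
  refine hbound.of_nonneg_of_le (fun x => by unfold doubleZetaTerm; positivity) fun ⟨i, j⟩ => ?_
  obtain ⟨r, rfl⟩ : ∃ r, q = r + 2 := ⟨q - 2, by omega⟩
  rw [doubleZetaTerm, div_mul_div_comm, one_mul, show p + (r + 2) - 2 = p + r by omega]
  apply one_div_le_one_div_of_le (by positivity)
  rw [pow_add, pow_add, mul_assoc]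
  gcongr <;> linarith [(i.cast_nonneg : (0 : ℝ) ≤ i), (j.cast_nonneg : (0 : ℝ) ≤ j)]

lemma hasSum_doubleZeta {p q : ℕ} (hq : 2 ≤ q) (hpq : 4 ≤ p + q) :
    HasSum (doubleZetaTerm p q) (doubleZeta p q) :=
  (summable_doubleZetaTerm hq hpq).hasSum

lemma zetaNat_mul_zetaNat {p q : ℕ} (hp : 2 ≤ p) (hq : 2 ≤ q) :
    zetaNat p * zetaNat q = doubleZeta p q + zetaNat (p + q) + doubleZeta q p := by
  have hprod := (hasSum_zetaNat hp).mul (hasSum_zetaNat hq)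
    ((summable_one_div_succ_pow hp).mul_of_nonneg (summable_one_div_succ_pow hq)
      (fun _ => by positivity) (fun _ => by positivity))
  rw [add_assoc]
  refine hprod.unique (hasSum_prod_of_upper_diag_lower ?_ ?_ ?_)
  · refine (hasSum_doubleZeta (p := p) hq (by omega)).congr_fun fun x => ?_
    dsimp only [doubleZetaTerm]
    push_cast
    ring
  · refine (hasSum_zetaNat (p := p + q) (by omega)).congr_fun fun i => ?_
    dsimp only
    ring
  · refine (hasSum_doubleZeta (p := q) hp (by omega)).congr_fun fun x => ?_
    dsimp only [doubleZetaTerm]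
    push_cast
    ring

lemma hasSum_harmonic_div_pow {q : ℕ} (hq : 3 ≤ q) :
    HasSum (fun k : ℕ => H (k + 1) / ((k : ℝ) + 1) ^ q) (zetaNat (q + 1) + doubleZeta 1 q) := by
  let f : ℕ × ℕ → ℝ := fun x =>
    if x.2 ≤ x.1 then 1 / (((x.2 : ℝ) + 1) * ((x.1 : ℝ) + 1) ^ q) else 0
  have hf : HasSum f (0 + (zetaNat (q + 1) + doubleZeta 1 q)) := by
    refine hasSum_prod_of_upper_diag_lower ?_ ?_ ?_
    · exact hasSum_zero.congr_fun fun x => if_neg (by omega)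
    · refine (hasSum_zetaNat (p := q + 1) (by omega)).congr_fun fun i => ?_
      simp only [f, if_pos le_rfl]
      ring
    · refine (hasSum_doubleZeta (p := 1) (q := q) (by omega) (by omega)).congr_fun fun x => ?_
      simp only [f, doubleZetaTerm, if_pos (show x.1 ≤ x.1 + x.2 + 1 by omega)]
      push_cast
      ring
  rw [zero_add] at hf
  refine hf.prod_fiberwise fun k => ?_
  have hfiber : H (k + 1) / ((k : ℝ) + 1) ^ q = ∑ j ∈ range (k + 1), f (k, j) := by
    rw [H_eq_sum_range, sum_div]
    refine sum_congr rfl fun j hj => ?_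
    rw [div_div]
    exact (if_pos (mem_range_succ_iff.1 hj)).symm
  rw [hfiber]
  exact hasSum_sum_of_ne_finset_zero fun j hj => if_neg (mt mem_range_succ_iff.2 hj)

lemma hasSum_harmonic_div_pow_four_doubleZeta :
    HasSum (fun k : ℕ => H (k + 1) / ((k : ℝ) + 1) ^ 4)
      (doubleZeta 1 4 + doubleZeta 1 4 + doubleZeta 3 2 + doubleZeta 2 3) := by
  have h14 := hasSum_doubleZeta (p := 1) (q := 4) (by norm_num) (by norm_num)
  have h14swap : HasSum (fun x : ℕ × ℕ => doubleZetaTerm 1 4 x.swap) (doubleZeta 1 4) :=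
    (Equiv.prodComm ℕ ℕ).hasSum_iff.2 h14
  have h32 := hasSum_doubleZeta (p := 3) (q := 2) (by norm_num) (by norm_num)
  have h23 := hasSum_doubleZeta (p := 2) (q := 3) (by norm_num) (by norm_num)
  refine (((h14.add h14swap).add h32).add h23).prod_fiberwise fun n => ?_
  have hanti : Antitone fun m : ℕ => 1 / ((m : ℝ) + 1) := fun a b hab =>
    one_div_le_one_div_of_le (by positivity) (by gcongr)
  have htele := (hasSum_sub_add_of_antitone hanti tendsto_one_div_add_atTop_nhds_zero_nat
    (n + 1)).mul_left (1 / ((n : ℝ) + 1) ^ 4)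
  rw [← H_eq_sum_range, one_div_mul_eq_div] at htele
  refine htele.congr_fun fun m => ?_
  -- partial fractions, with `a = n + 1`, `b = m + 1`:
  -- `1 / (a³ b (a + b)) = (1/a + 1/b) / (a + b)⁴ + 1 / (a³ (a + b)²) + 1 / (a² (a + b)³)`
  simp only [doubleZetaTerm, Prod.swap]
  push_cast
  field_simp
  ring

theorem hasSum_harmonic_div_pow_four :
    HasSum (fun k : ℕ => H (k + 1) / ((k : ℝ) + 1) ^ 4)
      (3 * zetaNat 5 - zetaNat 2 * zetaNat 3) := by
  have hS := hasSum_harmonic_div_pow_four_doubleZeta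
  have hdiag := hS.unique (hasSum_harmonic_div_pow (q := 4) (by norm_num))
  have hstuffle := zetaNat_mul_zetaNat (p := 2) (q := 3) (by norm_num) (by norm_num)
  convert hS using 1
  linarith

end EulerSum

open EulerSum

theorem euler_sum_3 :
    HasSum (fun k : ℕ => (H (k+1) : ℂ) / ((k : ℂ) + 1) ^ 4) (3 * riemannZeta 5 - riemannZeta 2 * riemannZeta 3) := by
  have h := Complex.hasSum_ofReal.2 hasSum_harmonic_div_pow_four
  have h2 : riemannZeta 2 = zetaNat 2 := by
    exact_mod_cast riemannZeta_natCast (p := 2) (by norm_num)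
  have h3 : riemannZeta 3 = zetaNat 3 := by
    exact_mod_cast riemannZeta_natCast (p := 3) (by norm_num)
  have h5 : riemannZeta 5 = zetaNat 5 := by
    exact_mod_cast riemannZeta_natCast (p := 5) (by norm_num)
  rw [h2, h3, h5]
  exact_mod_cast h
end

section
/- For every positive integer n and every integer p ≥ 1, the finite sum ∑_{k=1}^{n} H(k)^{(p)}/k equals H(n)^{(p)}·H(n) − ∑_{k=1}^{n} H(k)/k^p + H(n)^{(p+1)}. -/
open scoped BigOperators

/-- Summation by parts: the pairs `j ≤ k` and `k ≤ j` of `[1, n]²` cover the square and overlap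
exactly on the diagonal. -/
theorem Finset.sum_Icc_partialSum_mul {R : Type*} [CommRing R] (f g : ℕ → R) (n : ℕ) :
    ∑ k ∈ Finset.Icc 1 n, (∑ j ∈ Finset.Icc 1 k, f j) * g k =
      (∑ k ∈ Finset.Icc 1 n, f k) * (∑ k ∈ Finset.Icc 1 n, g k)
        - ∑ k ∈ Finset.Icc 1 n, (∑ j ∈ Finset.Icc 1 k, g j) * f k
        + ∑ k ∈ Finset.Icc 1 n, f k * g k := by
  induction n with
  | zero => simp
  | succ n ih =>
    simp only [Finset.sum_Icc_succ_top (Nat.le_add_left 1 n), ih]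
    ring

theorem finite_sum_17_general (n p : ℕ) :
    ∑ k ∈ Finset.Icc 1 n, Hgen p k / k =
      Hgen p n * H n - (∑ k ∈ Finset.Icc 1 n, H k / (k : ℝ) ^ p) + Hgen (p + 1) n := by
  have hpow : Hgen (p + 1) n = ∑ k ∈ Finset.Icc 1 n, 1 / (k : ℝ) ^ p * (1 / k) := by
    simp only [Hgen, pow_succ, one_div_mul_one_div]
  simp only [hpow, div_eq_mul_one_div (Hgen p _), div_eq_mul_one_div (H _)]
  exact Finset.sum_Icc_partialSum_mul (fun j => 1 / (j : ℝ) ^ p) (fun j => 1 / (j : ℝ)) n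

theorem finite_sum_17 (n p : ℕ) (hn : 1 ≤ n) (hp : 1 ≤ p) :
    ∑ k ∈ Finset.Icc 1 n, Hgen p k / k =
      Hgen p n * H n - (∑ k ∈ Finset.Icc 1 n, H k / (k : ℝ) ^ p) + Hgen (p + 1) n :=
  finite_sum_17_general n p
end

section
/- For every positive integer n, the finite sum ∑_{k=1}^{n} H(k)^2/k equals (1/3)H(n)^3 − (1/3)H(n)^{(3)} + ∑_{k=1}^{n} H(k)/k^2. -/
open scoped BigOperators

open Finset

/-- With `S k = ∑_{j=1}^k a j`, the cubes telescope:
`S k ^ 3 - S (k - 1) ^ 3 = 3 S k ^ 2 a k - 3 S k a k ^ 2 + a k ^ 3`. -/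
theorem three_mul_sum_partialSum_sq_mul {R : Type*} [CommRing R] (a : ℕ → R) (n : ℕ) :
    3 * ∑ k ∈ Icc 1 n, (∑ j ∈ Icc 1 k, a j) ^ 2 * a k =
      (∑ k ∈ Icc 1 n, a k) ^ 3 - ∑ k ∈ Icc 1 n, a k ^ 3 +
        3 * ∑ k ∈ Icc 1 n, (∑ j ∈ Icc 1 k, a j) * a k ^ 2 := by
  induction n with
  | zero => simp
  | succ n ih =>
    have hn : 1 ≤ n + 1 := n.succ_pos
    simp only [sum_Icc_succ_top hn]
    linear_combination ih

theorem finite_sum_18_general (n : ℕ) :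
    ∑ k ∈ Finset.Icc 1 n, H k ^ 2 / k =
      (1 / 3) * H n ^ 3 - (1 / 3) * Hgen 3 n + ∑ k ∈ Finset.Icc 1 n, H k / (k : ℝ) ^ 2 := by
  have key := three_mul_sum_partialSum_sq_mul (fun j : ℕ ↦ (1 : ℝ) / j) n
  simp only [one_div_pow, mul_one_div] at key
  unfold H Hgen
  linear_combination key / 3

theorem finite_sum_18 (n : ℕ) (hn : 1 ≤ n) :
    ∑ k ∈ Finset.Icc 1 n, H k ^ 2 / k =
      (1 / 3) * H n ^ 3 - (1 / 3) * Hgen 3 n + ∑ k ∈ Finset.Icc 1 n, H k / (k : ℝ) ^ 2 :=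
  finite_sum_18_general n
end
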